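/- For Δ > 0 and ρ ∈ (−1,1) with ρ·e^{−2Δ} < 1, the solution of the scalar ODE Σ'(t) = −2(κ + S(t))·Σ(t) + 1 with Σ(0) = 0, where S(t) = −κ + Δ(1+ρe^{−2Δ(1−t)})/(1−ρe^{−2Δ(1−t)}), satisfies Σ(1) = ((1−ρ)/(1−ρe^{−2Δ}))·(1−e^{−2Δ})/(2Δ). -/

import Mathlib

/-
The variance solves a scalar linear ODE whose coefficient is continuous on `[0, 1]`, so by
Grönwall it is determined by its initial value. Writing `p t = ρ e^{-2Δ(1-t)}`, the function
`(1 - p t)(1 - e^{-2Δt}) / (2Δ(1 - p 0))` solves the same problem: the check reduces to the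
identity `p t · e^{-2Δt} = p 0`. Evaluating it at `t = 1` gives the claim.
-/

open Set Real

theorem eqOn_Icc_of_hasDerivAt_linear {a b V W : ℝ → ℝ} {t₀ t₁ : ℝ}
    (ha : ContinuousOn a (Icc t₀ t₁))
    (hV : ∀ t ∈ Icc t₀ t₁, HasDerivAt V (a t * V t + b t) t)
    (hW : ∀ t ∈ Icc t₀ t₁, HasDerivAt W (a t * W t + b t) t) (h₀ : V t₀ = W t₀) :
    EqOn V W (Icc t₀ t₁) := by
  obtain ⟨K, hK⟩ := isCompact_Icc.exists_bound_of_continuousOn ha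
  have hdiff : ∀ t ∈ Icc t₀ t₁, HasDerivAt (V - W) (a t * (V - W) t) t := fun t ht =>
    ((hV t ht).sub (hW t ht)).congr_deriv (by simp only [Pi.sub_apply]; ring)
  intro t ht
  refine sub_eq_zero.mp <| eq_zero_of_abs_deriv_le_mul_abs_self_of_eq_zero_right (K := K)
    (fun s hs => (hdiff s hs).continuousAt.continuousWithinAt)
    (fun s hs => (hdiff s (Ico_subset_Icc_self hs)).hasDerivWithinAt) (sub_eq_zero.mpr h₀)
    (fun s hs => ?_) t ht
  rw [norm_mul]
  exact mul_le_mul_of_nonneg_right (hK s (Ico_subset_Icc_self hs)) (norm_nonneg _)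

theorem mul_exp_lt_one {ρ x : ℝ} (hρ : ρ < 1) (hx : x ≤ 0) : ρ * exp x < 1 := by
  rcases le_or_gt ρ 0 with hρ0 | hρ0
  · nlinarith [exp_pos x]
  · nlinarith [exp_le_one_iff.mpr hx]

noncomputable def varianceClosedForm (Δ ρ t : ℝ) : ℝ :=
  (1 - ρ * exp (-2 * Δ * (1 - t))) * (1 - exp (-2 * Δ * t)) / (2 * Δ * (1 - ρ * exp (-2 * Δ)))

theorem varianceClosedForm_zero (Δ ρ : ℝ) : varianceClosedForm Δ ρ 0 = 0 := by
  simp [varianceClosedForm]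

theorem varianceClosedForm_one (Δ ρ : ℝ) :
    varianceClosedForm Δ ρ 1 =
      (1 - ρ) / (1 - ρ * exp (-2 * Δ)) * ((1 - exp (-2 * Δ)) / (2 * Δ)) := by
  simp only [varianceClosedForm, sub_self, mul_zero, exp_zero, mul_one]
  rw [div_mul_div_comm, mul_comm (2 * Δ)]

theorem hasDerivAt_varianceClosedForm {Δ ρ : ℝ} (t : ℝ) (hΔ : Δ ≠ 0)
    (h₀ : 1 - ρ * exp (-2 * Δ) ≠ 0) (ht : 1 - ρ * exp (-2 * Δ * (1 - t)) ≠ 0) :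
    HasDerivAt (varianceClosedForm Δ ρ)
      (-2 * Δ * (1 + ρ * exp (-2 * Δ * (1 - t))) / (1 - ρ * exp (-2 * Δ * (1 - t)))
        * varianceClosedForm Δ ρ t + 1) t := by
  have hp : HasDerivAt (fun s => 1 - ρ * exp (-2 * Δ * (1 - s)))
      (-2 * Δ * (ρ * exp (-2 * Δ * (1 - t)))) t :=
    ((((hasDerivAt_id' t).const_sub 1).const_mul (-2 * Δ)).exp.const_mul ρ).const_sub 1
      |>.congr_deriv (by ring)
  have he : HasDerivAt (fun s => 1 - exp (-2 * Δ * s)) (2 * Δ * exp (-2 * Δ * t)) t :=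
    (((hasDerivAt_id' t).const_mul (-2 * Δ)).exp).const_sub 1 |>.congr_deriv (by ring)
  have hprod : ρ * exp (-2 * Δ) = ρ * exp (-2 * Δ * (1 - t)) * exp (-2 * Δ * t) := by
    rw [mul_assoc, ← exp_add]; ring_nf
  refine ((hp.mul he).div_const _).congr_deriv ?_
  unfold varianceClosedForm
  rw [hprod] at h₀ ⊢
  generalize ρ * exp (-2 * Δ * (1 - t)) = p at *
  generalize exp (-2 * Δ * t) = e at *
  field_simp
  ring

theorem stmt_5_general (κ Δ ρ : ℝ) (hΔ : 0 < Δ) (hρ : ρ ∈ Ioo (-1 : ℝ) 1)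
    (S : ℝ → ℝ)
    (hS : ∀ t, S t = -κ + Δ * (1 + ρ * Real.exp (-2 * Δ * (1 - t)))
        / (1 - ρ * Real.exp (-2 * Δ * (1 - t))))
    (V : ℝ → ℝ) (hV0 : V 0 = 0)
    (hVode : ∀ t ∈ Icc (0 : ℝ) 1, HasDerivAt V (-2 * (κ + S t) * V t + 1) t) :
    V 1 = (1 - ρ) / (1 - ρ * Real.exp (-2 * Δ)) * ((1 - Real.exp (-2 * Δ)) / (2 * Δ)) := by
  have hq : ∀ t ∈ Icc (0 : ℝ) 1, 1 - ρ * exp (-2 * Δ * (1 - t)) ≠ 0 := fun t ht =>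
    (sub_pos.mpr (mul_exp_lt_one hρ.2 (by nlinarith [ht.2]))).ne'
  have hq₀ : 1 - ρ * exp (-2 * Δ) ≠ 0 := by simpa using hq 0 (left_mem_Icc.mpr zero_le_one)
  have hgain : ∀ t, -2 * (κ + S t) =
      -2 * Δ * (1 + ρ * exp (-2 * Δ * (1 - t))) / (1 - ρ * exp (-2 * Δ * (1 - t))) := fun t => by
    rw [hS]; ring
  have hcont : ContinuousOn
      (fun t => -2 * Δ * (1 + ρ * exp (-2 * Δ * (1 - t))) / (1 - ρ * exp (-2 * Δ * (1 - t))))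
      (Icc 0 1) := ContinuousOn.div (by fun_prop) (by fun_prop) hq
  have hV_eq := eqOn_Icc_of_hasDerivAt_linear (b := fun _ => 1) hcont
    (fun t ht => hgain t ▸ hVode t ht)
    (fun t ht => hasDerivAt_varianceClosedForm t hΔ.ne' hq₀ (hq t ht))
    (by rw [hV0, varianceClosedForm_zero])
  rw [hV_eq (right_mem_Icc.mpr zero_le_one), varianceClosedForm_one]

/-- Terminal value of the variance under the closed-form Riccati gain: the solution
of `Σ' = -2(κ + S)Σ + 1`, `Σ 0 = 0`, with
`S t = -κ + Δ(1 + ρ e^{-2Δ(1-t)})/(1 - ρ e^{-2Δ(1-t)})`, satisfies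
`Σ 1 = ((1-ρ)/(1-ρ e^{-2Δ})) (1 - e^{-2Δ})/(2Δ)`. -/
theorem stmt_5 (κ Δ ρ : ℝ) (hΔ : 0 < Δ) (hρ : ρ ∈ Ioo (-1 : ℝ) 1)
    (hρr : ρ * Real.exp (-2 * Δ) < 1)
    (S : ℝ → ℝ)
    (hS : ∀ t, S t = -κ + Δ * (1 + ρ * Real.exp (-2 * Δ * (1 - t)))
        / (1 - ρ * Real.exp (-2 * Δ * (1 - t))))
    (V : ℝ → ℝ) (hV0 : V 0 = 0)
    (hVode : ∀ t ∈ Icc (0 : ℝ) 1, HasDerivAt V (-2 * (κ + S t) * V t + 1) t) :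
    V 1 = (1 - ρ) / (1 - ρ * Real.exp (-2 * Δ)) * ((1 - Real.exp (-2 * Δ)) / (2 * Δ)) :=
  stmt_5_general κ Δ ρ hΔ hρ S hS V hV0 hVode
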